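/- Let G be a chordal graph on n vertices and let the cone S₊(G) consist of n×n PSD matrices with zero entries at non-edges. Let x ∈ π_G(PSD(n)) be a nonzero PSD-completable matrix and r the maximum rank over all PSD completions of x. Then x generates an extreme ray of π_G(PSD(n)) if and only if r = 1. -/

import Mathlib

open Matrix
open scoped Classical

/-- `F` is a face of the convex cone `K`. -/
def IsFace {M : Type*} [AddCommGroup M] [Module ℝ M] (K F : Set M) : Prop :=
  F.Nonempty ∧ Convex ℝ F ∧ (∀ x ∈ F, ∀ c : ℝ, 0 ≤ c → c • x ∈ F) ∧ F ⊆ K ∧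
    ∀ x ∈ K, ∀ y ∈ K, x + y ∈ F → x ∈ F ∧ y ∈ F

/-- The projection of a matrix onto the sparsity pattern of the graph `G`, zeroing out the
off-diagonal entries at non-edges. -/
noncomputable def piG {n : ℕ} (G : SimpleGraph (Fin n)) (x : Matrix (Fin n) (Fin n) ℝ) :
    Matrix (Fin n) (Fin n) ℝ :=
  Matrix.of fun i j => if i ≠ j ∧ ¬ G.Adj i j then 0 else x i j

/-- `G` is chordal: it admits a perfect elimination ordering. -/
def IsChordal {n : ℕ} (G : SimpleGraph (Fin n)) : Prop :=
  ∃ σ : Fin n ≃ Fin n, ∀ i j k : Fin n, i < j → j < k →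
    G.Adj (σ i) (σ j) → G.Adj (σ i) (σ k) → G.Adj (σ j) (σ k)

section helpers
variable {n : ℕ}

lemma sym_dot {w : Matrix (Fin n) (Fin n) ℝ} (hw : w.IsHermitian) (u z : Fin n → ℝ) :
    u ⬝ᵥ w *ᵥ z = z ⬝ᵥ w *ᵥ u := by
  have hs : ∀ i j, w i j = w j i := fun i j => by
    have := congrFun (congrFun hw j) i
    simpa [conjTranspose_apply] using this
  simp only [dotProduct, mulVec, Finset.mul_sum]
  rw [Finset.sum_comm]
  refine Finset.sum_congr rfl fun j _ => Finset.sum_congr rfl fun i _ => ?_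
  rw [hs j i]; ring

lemma psd_quad_nonneg {w : Matrix (Fin n) (Fin n) ℝ} (hw : w.PosSemidef) (z : Fin n → ℝ) :
    0 ≤ z ⬝ᵥ w *ᵥ z := by
  simpa using hw.dotProduct_mulVec_nonneg z

lemma psd_cs {w : Matrix (Fin n) (Fin n) ℝ} (hw : w.PosSemidef) (u z : Fin n → ℝ) :
    (u ⬝ᵥ w *ᵥ z) ^ 2 ≤ (u ⬝ᵥ w *ᵥ u) * (z ⬝ᵥ w *ᵥ z) := by
  have key : ∀ t : ℝ, 0 ≤ (z ⬝ᵥ w *ᵥ z) * (t * t) + (2 * (u ⬝ᵥ w *ᵥ z)) * t + (u ⬝ᵥ w *ᵥ u) := by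
    intro t
    have h0 := psd_quad_nonneg hw (u + t • z)
    have e : (u + t • z) ⬝ᵥ w *ᵥ (u + t • z)
        = (z ⬝ᵥ w *ᵥ z) * (t * t) + (2 * (u ⬝ᵥ w *ᵥ z)) * t + (u ⬝ᵥ w *ᵥ u) := by
      rw [mulVec_add, mulVec_smul, dotProduct_add, add_dotProduct, add_dotProduct,
        dotProduct_smul, dotProduct_smul, smul_dotProduct, smul_dotProduct,
        sym_dot hw.1 z u]
      simp only [smul_eq_mul]
      ring
    linarith [e ▸ h0]
  have hd := discrim_le_zero key
  rw [discrim] at hd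
  nlinarith [hd]

lemma psd_mulVec_zero {w : Matrix (Fin n) (Fin n) ℝ} (hw : w.PosSemidef) {z : Fin n → ℝ}
    (h : z ⬝ᵥ w *ᵥ z = 0) : w *ᵥ z = 0 := by
  funext i
  have h1 := psd_cs hw (Pi.single i 1) z
  rw [h, mul_zero, single_dotProduct, one_mul] at h1
  have h2 := sq_nonneg ((w *ᵥ z) i)
  have h3 : ((w *ᵥ z) i) ^ 2 = 0 := le_antisymm h1 h2
  have h4 : (w *ᵥ z) i = 0 := by nlinarith [h3]
  simpa using h4

lemma psd_diag_nonneg {w : Matrix (Fin n) (Fin n) ℝ} (hw : w.PosSemidef) (k : Fin n) :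
    0 ≤ w k k := by
  have := psd_quad_nonneg hw (Pi.single k 1)
  simpa [mulVec_single, single_dotProduct] using this

lemma psd_eq_zero_of_diag {w : Matrix (Fin n) (Fin n) ℝ} (hw : w.PosSemidef)
    (h : ∀ k, w k k = 0) : w = 0 := by
  ext i j
  have hq : (Pi.single j 1 : Fin n → ℝ) ⬝ᵥ w *ᵥ Pi.single j 1 = 0 := by
    simp [mulVec_single, single_dotProduct, h j]
  have hz := psd_mulVec_zero hw hq
  have := congrFun hz i
  simpa [mulVec_single] using this

lemma vecMulVec_mulVec' (v u z : Fin n → ℝ) : vecMulVec v u *ᵥ z = (u ⬝ᵥ z) • v := by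
  funext i
  simp only [mulVec, dotProduct, vecMulVec_apply, Pi.smul_apply, smul_eq_mul, Finset.sum_mul]
  exact Finset.sum_congr rfl fun j _ => by ring

lemma psd_vecMulVec (v : Fin n → ℝ) : (vecMulVec v v).PosSemidef := by
  refine Matrix.PosSemidef.of_dotProduct_mulVec_nonneg ?_ ?_
  · ext i j; simp [conjTranspose_apply, vecMulVec_apply, mul_comm]
  · intro z
    have : star z ⬝ᵥ vecMulVec v v *ᵥ z = (v ⬝ᵥ z) * (v ⬝ᵥ z) := by
      rw [vecMulVec_mulVec', dotProduct_smul]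
      simp [smul_eq_mul, dotProduct_comm]
    rw [this]
    exact mul_self_nonneg _

lemma psd_smul {w : Matrix (Fin n) (Fin n) ℝ} (hw : w.PosSemidef) {c : ℝ} (hc : 0 ≤ c) :
    (c • w).PosSemidef := by
  refine Matrix.PosSemidef.of_dotProduct_mulVec_nonneg ?_ ?_
  · ext i j
    have := congrFun (congrFun hw.1 i) j
    simp only [conjTranspose_apply, Matrix.smul_apply, smul_eq_mul, star_trivial] at this ⊢
    rw [this]
  · intro z
    rw [smul_mulVec, dotProduct_smul]
    exact mul_nonneg hc (hw.dotProduct_mulVec_nonneg z)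

lemma psd_add {a b : Matrix (Fin n) (Fin n) ℝ} (ha : a.PosSemidef) (hb : b.PosSemidef) :
    (a + b).PosSemidef := by
  refine Matrix.PosSemidef.of_dotProduct_mulVec_nonneg ?_ ?_
  · exact ha.1.add hb.1
  · intro z
    rw [add_mulVec, dotProduct_add]
    exact add_nonneg (ha.dotProduct_mulVec_nonneg z) (hb.dotProduct_mulVec_nonneg z)


variable {G : SimpleGraph (Fin n)}

lemma piG_add (a b : Matrix (Fin n) (Fin n) ℝ) : piG G (a + b) = piG G a + piG G b := by
  ext i j
  by_cases h : i ≠ j ∧ ¬ G.Adj i j <;> simp [piG, h]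

lemma piG_smul (c : ℝ) (a : Matrix (Fin n) (Fin n) ℝ) : piG G (c • a) = c • piG G a := by
  ext i j
  by_cases h : i ≠ j ∧ ¬ G.Adj i j <;> simp [piG, h]

lemma piG_zero : piG G (0 : Matrix (Fin n) (Fin n) ℝ) = 0 := by
  ext i j
  by_cases h : i ≠ j ∧ ¬ G.Adj i j <;> simp [piG, h]

lemma piG_diag (a : Matrix (Fin n) (Fin n) ℝ) (k : Fin n) : piG G a k k = a k k := by
  simp [piG]

lemma split_vecMulVec {wa wb : Matrix (Fin n) (Fin n) ℝ} (ha : wa.PosSemidef)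
    (hb : wb.PosSemidef) {v : Fin n → ℝ} (hsum : wa + wb = vecMulVec v v) :
    ∃ t : ℝ, 0 ≤ t ∧ wa = t • vecMulVec v v := by
  by_cases hv : v = 0
  · subst hv
    have hM : vecMulVec (0 : Fin n → ℝ) (0 : Fin n → ℝ) = (0 : Matrix (Fin n) (Fin n) ℝ) := by ext i j; simp [vecMulVec_apply]
    have hdiag : ∀ k, wa k k = 0 := by
      intro k
      have h1 := psd_diag_nonneg ha k
      have h2 := psd_diag_nonneg hb k
      have h3 : wa k k + wb k k = 0 := by
        have h4 := congrFun (congrFun (hsum.trans hM) k) k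
        simpa [Matrix.add_apply] using h4
      linarith
    exact ⟨0, le_refl _, by rw [psd_eq_zero_of_diag ha hdiag, zero_smul]⟩
  · obtain ⟨j0, hj0⟩ : ∃ j0, v j0 ≠ 0 := by
      by_contra h; push_neg at h; exact hv (funext h)
    have hwasym : ∀ i j, wa i j = wa j i := fun i j => by
      have := congrFun (congrFun ha.1 j) i
      simpa [conjTranspose_apply] using this
    have key : ∀ i j, v j0 * wa i j = v j * wa i j0 := by
      intro i j
      set z : Fin n → ℝ := v j0 • (Pi.single j 1 : Fin n → ℝ) - v j • (Pi.single j0 1 : Fin n → ℝ) with hz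
      have hvz : v ⬝ᵥ z = 0 := by
        simp [hz, dotProduct_sub, dotProduct_smul, dotProduct_single, smul_eq_mul]
        ring
      have hMz : vecMulVec v v *ᵥ z = 0 := by
        rw [vecMulVec_mulVec', hvz, zero_smul]
      have hquad : z ⬝ᵥ wa *ᵥ z + z ⬝ᵥ wb *ᵥ z = 0 := by
        have h5 : z ⬝ᵥ (wa + wb) *ᵥ z = 0 := by rw [hsum, hMz, dotProduct_zero]
        rw [add_mulVec, dotProduct_add] at h5
        exact h5
      have hza : z ⬝ᵥ wa *ᵥ z = 0 := by
        have h1 := psd_quad_nonneg ha z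
        have h2 := psd_quad_nonneg hb z
        linarith
      have hwz := psd_mulVec_zero ha hza
      have h6 := congrFun hwz i
      simp only [hz, mulVec_sub, mulVec_smul, mulVec_single, Pi.sub_apply, Pi.smul_apply,
        smul_eq_mul, mul_one, Pi.zero_apply, MulOpposite.op_one, one_smul, Matrix.col_apply] at h6
      linarith
    refine ⟨wa j0 j0 / (v j0) ^ 2, div_nonneg (psd_diag_nonneg ha j0) (sq_nonneg _), ?_⟩
    ext i j
    simp only [Matrix.smul_apply, vecMulVec_apply, smul_eq_mul]
    have k1 := key i j
    have k2 := key j0 i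
    have hsij := hwasym i j0
    field_simp
    linear_combination v j0 * k1 + v j * v j0 * hsij + v j * k2

lemma col_mem_range (w : Matrix (Fin n) (Fin n) ℝ) (j : Fin n) :
    (fun i => w i j) ∈ LinearMap.range w.mulVecLin := by
  refine ⟨Pi.single j 1, ?_⟩
  funext i
  simp [mulVecLin_apply, mulVec_single]

lemma one_le_rank {w : Matrix (Fin n) (Fin n) ℝ} (hw0 : w ≠ 0) : 1 ≤ w.rank := by
  by_contra h
  push_neg at h
  have h0 : w.rank = 0 := Nat.lt_one_iff.mp h
  have hbot : LinearMap.range w.mulVecLin = ⊥ := Submodule.finrank_eq_zero.mp h0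
  apply hw0
  ext i j
  have := col_mem_range w j
  rw [hbot, Submodule.mem_bot] at this
  have := congrFun this i
  simpa using this

lemma psd_rank_le_one {w : Matrix (Fin n) (Fin n) ℝ} (hw : w.PosSemidef) (h : w.rank ≤ 1) :
    ∃ v : Fin n → ℝ, w = vecMulVec v v := by
  by_cases hw0 : w = 0
  · exact ⟨0, by ext i j; simp [hw0, vecMulVec_apply]⟩
  obtain ⟨k, hk⟩ : ∃ k, w k k ≠ 0 := by
    by_contra hc; push_neg at hc; exact hw0 (psd_eq_zero_of_diag hw hc)
  have hkpos : 0 < w k k := (psd_diag_nonneg hw k).lt_of_ne (Ne.symm hk)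
  set d : Fin n → ℝ := fun i => w i k with hd
  have hdne : d ≠ 0 := fun h0 => hk (by simpa [hd] using congrFun h0 k)
  have hle : (ℝ ∙ d) ≤ LinearMap.range w.mulVecLin := by
    rw [Submodule.span_singleton_le_iff_mem]; exact col_mem_range w k
  have heq : (ℝ ∙ d) = LinearMap.range w.mulVecLin := by
    apply Submodule.eq_of_le_of_finrank_le hle
    rw [finrank_span_singleton hdne]
    exact h
  have hcol : ∀ j, ∃ a : ℝ, a • d = (fun i => w i j) := by
    intro j
    have hj := col_mem_range w j
    rw [← heq, Submodule.mem_span_singleton] at hj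
    exact hj
  choose lam hlam using hcol
  have hwsym : ∀ i j, w i j = w j i := fun i j => by
    have := congrFun (congrFun hw.1 j) i
    simpa [conjTranspose_apply] using this
  refine ⟨fun i => lam i * Real.sqrt (w k k), ?_⟩
  ext i j
  have h1 : w i j = lam j * w i k := by
    have := congrFun (hlam j) i
    simpa [smul_eq_mul, hd] using this.symm
  have h2 : w i k = lam i * w k k := by
    have h3 := congrFun (hlam i) k
    simp only [Pi.smul_apply, smul_eq_mul, hd] at h3
    rw [hwsym i k, ← h3]
  have hs : Real.sqrt (w k k) * Real.sqrt (w k k) = w k k :=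
    Real.mul_self_sqrt (le_of_lt hkpos)
  rw [vecMulVec_apply, h1, h2]
  linear_combination (- lam i * lam j) * hs

lemma face_proj_vecMulVec {G : SimpleGraph (Fin n)} {x w : Matrix (Fin n) (Fin n) ℝ}
    (hF : IsFace {y | ∃ w : Matrix (Fin n) (Fin n) ℝ, w.PosSemidef ∧ piG G w = y}
      {y | ∃ c : ℝ, 0 ≤ c ∧ y = c • x})
    (hw : w.PosSemidef) (hπ : piG G w = x) (z : Fin n → ℝ) :
    ∃ c : ℝ, 0 ≤ c ∧ piG G (vecMulVec (w *ᵥ z) (w *ᵥ z)) = c • x := by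
  set q := z ⬝ᵥ w *ᵥ z with hq
  have hq0 : 0 ≤ q := psd_quad_nonneg hw z
  rcases eq_or_lt_of_le hq0 with hq' | hq'
  · have hz0 : w *ᵥ z = 0 := psd_mulVec_zero hw hq'.symm
    refine ⟨0, le_refl _, ?_⟩
    rw [hz0, zero_smul]
    have : vecMulVec (0 : Fin n → ℝ) (0 : Fin n → ℝ) = (0 : Matrix (Fin n) (Fin n) ℝ) := by
      ext i j; simp [vecMulVec_apply]
    rw [this, piG_zero]
  · set v := w *ᵥ z with hv
    set A : Matrix (Fin n) (Fin n) ℝ := q⁻¹ • vecMulVec v v with hA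
    have hApsd : A.PosSemidef := psd_smul (psd_vecMulVec v) (inv_nonneg.mpr hq0)
    have hBpsd : (w - A).PosSemidef := by
      refine Matrix.PosSemidef.of_dotProduct_mulVec_nonneg ?_ ?_
      · exact hw.1.sub hApsd.1
      · intro u
        have hcs := psd_cs hw u z
        have hAu : star u ⬝ᵥ A *ᵥ u = q⁻¹ * (u ⬝ᵥ w *ᵥ z) ^ 2 := by
          rw [hA, smul_mulVec, dotProduct_smul, vecMulVec_mulVec', dotProduct_smul]
          simp only [smul_eq_mul, star_trivial]
          have : v ⬝ᵥ u = u ⬝ᵥ w *ᵥ z := by rw [hv, dotProduct_comm]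
          have h2 : u ⬝ᵥ v = u ⬝ᵥ w *ᵥ z := by rw [hv]
          rw [this, h2]; ring
        rw [sub_mulVec, dotProduct_sub, hAu]
        simp only [star_trivial]
        have hqq : q * q⁻¹ = 1 := mul_inv_cancel₀ (ne_of_gt hq')
        have h3 : 0 ≤ (u ⬝ᵥ w *ᵥ u) * q - (u ⬝ᵥ w *ᵥ z) ^ 2 := by linarith
        have h4 := mul_nonneg h3 (inv_nonneg.mpr hq0)
        nlinarith [h4, hqq]
    have hxF : x ∈ {y | ∃ c : ℝ, 0 ≤ c ∧ y = c • x} := ⟨1, zero_le_one, (one_smul ℝ x).symm⟩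
    have hsplit : piG G A + piG G (w - A) = x := by
      rw [← piG_add]
      have : A + (w - A) = w := by abel
      rw [this, hπ]
    have hmem := hF.2.2.2.2 (piG G A) ⟨A, hApsd, rfl⟩ (piG G (w - A)) ⟨w - A, hBpsd, rfl⟩
      (by rw [hsplit]; exact hxF)
    obtain ⟨c, hc, hAc⟩ := hmem.1
    refine ⟨q * c, mul_nonneg hq0 hc, ?_⟩
    have h5 : piG G A = q⁻¹ • piG G (vecMulVec v v) := by rw [hA, piG_smul]
    have h6 : piG G (vecMulVec v v) = q • piG G A := by
      rw [h5, smul_smul, mul_inv_cancel₀ (ne_of_gt hq'), one_smul]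
    rw [h6, hAc, smul_smul]

theorem stmt9_aux {n : ℕ} (G : SimpleGraph (Fin n))
    (x : Matrix (Fin n) (Fin n) ℝ) (hxne : x ≠ 0)
    (hx : x ∈ {y | ∃ w : Matrix (Fin n) (Fin n) ℝ, w.PosSemidef ∧ piG G w = y})
    (r : ℕ)
    (hr : ∃ w : Matrix (Fin n) (Fin n) ℝ, w.PosSemidef ∧ piG G w = x ∧ w.rank = r)
    (hrmax : ∀ w : Matrix (Fin n) (Fin n) ℝ, w.PosSemidef → piG G w = x → w.rank ≤ r) :
    IsFace {y | ∃ w : Matrix (Fin n) (Fin n) ℝ, w.PosSemidef ∧ piG G w = y}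
        {y | ∃ c : ℝ, 0 ≤ c ∧ y = c • x} ↔ r = 1 := by
  constructor
  · -- forward direction
    intro hF
    obtain ⟨w, hwpsd, hwproj, hwrank⟩ := hr
    have hw0 : w ≠ 0 := by
      rintro rfl
      exact hxne (hwproj.symm.trans piG_zero)
    -- a diagonal entry of x that is positive
    obtain ⟨i0, hi0⟩ : ∃ i0, w i0 i0 ≠ 0 := by
      by_contra hc; push_neg at hc; exact hw0 (psd_eq_zero_of_diag hwpsd hc)
    have hxdiag : ∀ k, x k k = w k k := fun k => by rw [← hwproj, piG_diag]
    have hx0pos : 0 < x i0 i0 := by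
      rw [hxdiag]
      exact (psd_diag_nonneg hwpsd i0).lt_of_ne (Ne.symm hi0)
    set x0 := x i0 i0 with hx0
    -- the star relation
    have star : ∀ (z : Fin n → ℝ) (k : Fin n),
        ((w *ᵥ z) k) ^ 2 * x0 = ((w *ᵥ z) i0) ^ 2 * x k k := by
      intro z k
      obtain ⟨c, hc, hproj⟩ := face_proj_vecMulVec hF hwpsd hwproj z
      have e1 : ((w *ᵥ z) k) ^ 2 = c * x k k := by
        have h1 := congrFun (congrFun hproj k) k
        rw [piG_diag] at h1
        simp only [vecMulVec_apply, Matrix.smul_apply, smul_eq_mul] at h1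
        nlinarith [h1]
      have e2 : ((w *ᵥ z) i0) ^ 2 = c * x0 := by
        have h1 := congrFun (congrFun hproj i0) i0
        rw [piG_diag] at h1
        simp only [vecMulVec_apply, Matrix.smul_apply, smul_eq_mul] at h1
        nlinarith [h1]
      rw [e1, e2]; ring
    -- a nonzero column direction
    obtain ⟨zs, hzs⟩ : ∃ zs : Fin n → ℝ, w *ᵥ zs ≠ 0 := by
      by_contra hc; push_neg at hc
      apply hw0
      ext i j
      have := congrFun (hc (Pi.single j 1)) i
      simpa [mulVec_single] using this
    set d := w *ᵥ zs with hd
    have hdi0 : d i0 ≠ 0 := by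
      intro h0
      apply hzs
      funext k
      have := star zs k
      rw [← hd, h0] at this
      simp only [ne_eq, zero_pow, OfNat.ofNat_ne_zero, not_false_eq_true, zero_mul] at this
      have hk2 : (d k) ^ 2 = 0 := by
        rcases mul_eq_zero.mp this with h | h
        · exact h
        · exact absurd h (ne_of_gt hx0pos)
      have := pow_eq_zero_iff (n := 2) (by norm_num) |>.mp hk2
      simpa using this
    -- every column lies in the span of d
    have hspan : LinearMap.range w.mulVecLin ≤ (ℝ ∙ d) := by
      rintro u ⟨y, rfl⟩
      rw [mulVecLin_apply]
      set u := w *ᵥ y with hu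
      have e1 : ∀ k, (u k) ^ 2 * x0 = (u i0) ^ 2 * x k k := fun k => star y k
      have e2 : ∀ k, (d k) ^ 2 * x0 = (d i0) ^ 2 * x k k := fun k => star zs k
      have esum : ∀ k, (u k + d k) ^ 2 * x0 = (u i0 + d i0) ^ 2 * x k k := by
        intro k
        have := star (y + zs) k
        simpa [mulVec_add, ← hu, ← hd] using this
      have ediff : ∀ k, (u k - d k) ^ 2 * x0 = (u i0 - d i0) ^ 2 * x k k := by
        intro k
        have := star (y - zs) k
        simpa [mulVec_sub, ← hu, ← hd] using this
      have e3 : ∀ k, u k * d k * x0 = u i0 * d i0 * x k k := by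
        intro k
        linear_combination (esum k - ediff k) / 4
      have key : ∀ k, d i0 * u k = u i0 * d k := by
        intro k
        have hsq : (d i0 * u k - u i0 * d k) ^ 2 * x0 = 0 := by
          linear_combination (d i0) ^ 2 * e1 k - 2 * (u i0) * (d i0) * e3 k
            + (u i0) ^ 2 * e2 k
        have h5 : (d i0 * u k - u i0 * d k) ^ 2 = 0 := by
          rcases mul_eq_zero.mp hsq with h | h
          · exact h
          · exact absurd h (ne_of_gt hx0pos)
        have h6 := pow_eq_zero_iff (n := 2) (by norm_num) |>.mp h5
        linarith [h6]
      rw [Submodule.mem_span_singleton]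
      refine ⟨u i0 / d i0, funext fun k => ?_⟩
      simp only [Pi.smul_apply, smul_eq_mul]
      field_simp
      linarith [key k]
    have hrank1 : w.rank ≤ 1 := by
      have h7 : w.rank = Module.finrank ℝ (LinearMap.range w.mulVecLin) := rfl
      rw [h7]
      calc Module.finrank ℝ (LinearMap.range w.mulVecLin)
          ≤ Module.finrank ℝ (ℝ ∙ d) := Submodule.finrank_mono hspan
        _ = 1 := finrank_span_singleton hzs
    have hge : 1 ≤ r := hwrank ▸ one_le_rank hw0
    omega
    -- r = 1 from hwrank : w.rank = r, hrank1, hge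
  · -- reverse direction
    intro hr1
    refine ⟨⟨0, 0, le_refl _, (zero_smul ℝ x).symm⟩, ?_, ?_, ?_, ?_⟩
    · rintro a ⟨c1, hc1, rfl⟩ b ⟨c2, hc2, rfl⟩ s t hs ht hst
      exact ⟨s * c1 + t * c2, by positivity, by rw [smul_smul, smul_smul, ← add_smul]⟩
    · rintro y ⟨c1, hc1, rfl⟩ c hc
      exact ⟨c * c1, mul_nonneg hc hc1, by rw [smul_smul]⟩
    · rintro y ⟨c, hc, rfl⟩
      obtain ⟨w0, hw0psd, hproj⟩ := hx
      exact ⟨c • w0, psd_smul hw0psd hc, by rw [piG_smul, hproj]⟩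
    · rintro a ⟨wa, hwa, rfl⟩ b ⟨wb, hwb, rfl⟩ hab
      obtain ⟨c, hc, hsum⟩ := hab
      have hpi : piG G (wa + wb) = c • x := by rw [piG_add]; exact hsum
      rcases eq_or_lt_of_le hc with hc0 | hcpos
      · -- c = 0
        have hz : piG G (wa + wb) = 0 := by rw [hpi, ← hc0, zero_smul]
        have hdiag : ∀ k, wa k k + wb k k = 0 := by
          intro k
          have := congrFun (congrFun hz k) k
          rw [piG_diag] at this
          simpa [Matrix.add_apply] using this
        have hwa0 : wa = 0 := psd_eq_zero_of_diag hwa fun k => by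
          have h1 := psd_diag_nonneg hwa k
          have h2 := psd_diag_nonneg hwb k
          linarith [hdiag k]
        have hwb0 : wb = 0 := psd_eq_zero_of_diag hwb fun k => by
          have h1 := psd_diag_nonneg hwa k
          have h2 := psd_diag_nonneg hwb k
          linarith [hdiag k]
        constructor
        · exact ⟨0, le_refl _, by rw [hwa0, piG_zero, zero_smul]⟩
        · exact ⟨0, le_refl _, by rw [hwb0, piG_zero, zero_smul]⟩
      · -- c > 0
        set wc : Matrix (Fin n) (Fin n) ℝ := c⁻¹ • (wa + wb) with hwc
        have hwcpsd : wc.PosSemidef := psd_smul (psd_add hwa hwb) (inv_nonneg.mpr hc)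
        have hwcproj : piG G wc = x := by
          rw [hwc, piG_smul, hpi, smul_smul, inv_mul_cancel₀ (ne_of_gt hcpos), one_smul]
        have hrk : wc.rank ≤ 1 := hr1 ▸ hrmax wc hwcpsd hwcproj
        obtain ⟨v, hv⟩ := psd_rank_le_one hwcpsd hrk
        have hcwc : wa + wb = c • wc := by
          rw [hwc, smul_smul, mul_inv_cancel₀ (ne_of_gt hcpos), one_smul]
        have hss : Real.sqrt c * Real.sqrt c = c := Real.mul_self_sqrt hc
        have hsum2 : wa + wb = vecMulVec (Real.sqrt c • v) (Real.sqrt c • v) := by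
          rw [hcwc, hv]
          ext i j
          simp only [Matrix.smul_apply, vecMulVec_apply, smul_eq_mul, Pi.smul_apply]
          linear_combination (- v i * v j) * hss
        have hMproj : piG G (vecMulVec (Real.sqrt c • v) (Real.sqrt c • v)) = c • x := by
          rw [← hsum2, hpi]
        obtain ⟨t, ht, hwa'⟩ := split_vecMulVec hwa hwb hsum2
        obtain ⟨s, hs, hwb'⟩ := split_vecMulVec hwb hwa (by rw [add_comm]; exact hsum2)
        constructor
        · exact ⟨t * c, mul_nonneg ht hc, by rw [hwa', piG_smul, hMproj, smul_smul]⟩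
        · exact ⟨s * c, mul_nonneg hs hc, by rw [hwb', piG_smul, hMproj, smul_smul]⟩

end helpers

/-- Let `G` be a chordal graph, `x` a nonzero PSD-completable matrix with pattern `G`, and
`r` the maximum rank over all PSD completions of `x`.  Then `x` generates an extreme ray of
`π_G(PSD(n))` if and only if `r = 1`. -/
theorem stmt9 {n : ℕ} (G : SimpleGraph (Fin n)) (hG : IsChordal G)
    (x : Matrix (Fin n) (Fin n) ℝ) (hxne : x ≠ 0)
    (hx : x ∈ {y | ∃ w : Matrix (Fin n) (Fin n) ℝ, w.PosSemidef ∧ piG G w = y})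
    (r : ℕ)
    (hr : ∃ w : Matrix (Fin n) (Fin n) ℝ, w.PosSemidef ∧ piG G w = x ∧ w.rank = r)
    (hrmax : ∀ w : Matrix (Fin n) (Fin n) ℝ, w.PosSemidef → piG G w = x → w.rank ≤ r) :
    IsFace {y | ∃ w : Matrix (Fin n) (Fin n) ℝ, w.PosSemidef ∧ piG G w = y}
        {y | ∃ c : ℝ, 0 ≤ c ∧ y = c • x} ↔ r = 1 :=
  stmt9_aux G x hxne hx r hr hrmax
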